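/- arXiv:2306.00493 — 2 statements merged into one kernel-verified Lean document; each statement's English description precedes it below -/
import Mathlib

section
/- Let S be a finite monoid, A a finite set, F ⊆ SOp(A), λ = (s_1, …, s_n) ∈ S^n a signum, and g an n-ary S-operation with sgn(g) = λ. Then g ∈ ⟨F⟩_S if and only if g S-preserves Γ_F(χ^λ). -/
namespace SPreclone

/-- An `S`-operation on `A`: an `(n+1)`-ary operation together with a signum
assigning an element of `S` to each argument. -/
structure SOp (S A : Type*) where
  n : ℕ
  fn : (Fin (n + 1) → A) → A
  sgn : Fin (n + 1) → S

/-- An `S`-relation on `A`: a family of `(m+1)`-ary relations indexed by `S`. -/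
structure SRel (S A : Type*) where
  m : ℕ
  rel : S → Set (Fin (m + 1) → A)

section

variable {S A : Type*} [Monoid S]

/-- `f` S-preserves `ρ`. -/
def SPreserves (f : SOp S A) (ρ : SRel S A) : Prop :=
  ∀ s : S, ∀ r : Fin (f.n + 1) → (Fin (ρ.m + 1) → A),
    (∀ i, r i ∈ ρ.rel (f.sgn i * s)) →
    (fun j => f.fn fun i => r i j) ∈ ρ.rel s

/-- `S`-polymorphisms of a set of `S`-relations. -/
def SPol (Q : Set (SRel S A)) : Set (SOp S A) := { f | ∀ ρ ∈ Q, SPreserves f ρ }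

/-- Invariant `S`-relations of a set of `S`-operations. -/
def SInv (F : Set (SOp S A)) : Set (SRel S A) := { ρ | ∀ f ∈ F, SPreserves f ρ }

/-- The identity operation, with signum `(e)`. -/
def idOp (S A : Type*) [Monoid S] : SOp S A := ⟨0, fun x => x 0, fun _ => 1⟩

/-- Cyclic shift `ζ` of the arguments (and the signa). -/
def cycOp (f : SOp S A) : SOp S A :=
  ⟨f.n, fun x => f.fn fun j => x (j + 1), fun i => f.sgn (i - 1)⟩

/-- Transposition `τ` of the first two arguments (and their signa). -/
def swapOp (f : SOp S A) : SOp S A :=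
  ⟨f.n, fun x => f.fn fun j => x (Equiv.swap 0 1 j), fun i => f.sgn (Equiv.swap 0 1 i)⟩

/-- `∇^s`: adding a fictitious first argument with signum `s`. -/
def nablaOp (s : S) (f : SOp S A) : SOp S A :=
  ⟨f.n + 1, fun x => f.fn fun j => x j.succ, Fin.cases (motive := fun _ => S) s f.sgn⟩

open Classical in
/-- `Δ`: identification of the first two arguments when they have the same signum
(otherwise, and for unary operations, `Δ f := f`). -/
noncomputable def deltaOp (f : SOp S A) : SOp S A :=
  match f with
  | ⟨0, fn, sgn⟩ => ⟨0, fn, sgn⟩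
  | ⟨m + 1, fn, sgn⟩ =>
    if sgn 0 = sgn 1 then
      ⟨m, fun x => fn fun j => x ⟨j.val - 1, by have := j.isLt; omega⟩,
        fun i => sgn i.succ⟩
    else ⟨m + 1, fn, sgn⟩

/-- Composition `(f ∘ g)(x₁,…,x_m,x_{m+1},…,x_{m+n-1}) = f(g(x₁,…,x_m),x_{m+1},…,x_{m+n-1})`,
with signum `(s'₁s₁, …, s'_m s₁, s₂, …, s_n)`. -/
def compOp (f g : SOp S A) : SOp S A :=
  ⟨g.n + f.n,
   fun x => f.fn fun k => Fin.cases (motive := fun _ => A)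
     (g.fn fun i => x ⟨i.val, by have := i.isLt; omega⟩)
     (fun j => x ⟨g.n + 1 + j.val, by have := j.isLt; omega⟩) k,
   fun i =>
     if h : i.val < g.n + 1 then g.sgn ⟨i.val, h⟩ * f.sgn 0
     else f.sgn ⟨i.val - g.n, by have := i.isLt; omega⟩⟩

/-- A set of `S`-operations is an `S`-preclone if it contains the identity and is closed
under `ζ`, `τ`, `∇^s`, `Δ` and composition. -/
def IsSPreclone (F : Set (SOp S A)) : Prop :=
  idOp S A ∈ F ∧
  (∀ f ∈ F, cycOp f ∈ F) ∧
  (∀ f ∈ F, swapOp f ∈ F) ∧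
  (∀ (s : S), ∀ f ∈ F, nablaOp s f ∈ F) ∧
  (∀ f ∈ F, deltaOp f ∈ F) ∧
  (∀ f ∈ F, ∀ g ∈ F, compOp f g ∈ F)

/-- The `S`-preclone generated by `F` (the least `S`-preclone containing `F`). -/
def SSg (F : Set (SOp S A)) : Set (SOp S A) := ⋂₀ { G | IsSPreclone G ∧ F ⊆ G }

/-- `δ^S := (Δ_A)_{s ∈ S}`. -/
def deltaS (S A : Type*) : SRel S A := ⟨1, fun _ => { a | a 0 = a 1 }⟩

/-- Componentwise cyclic shift of coordinates. -/
def cycRel (ρ : SRel S A) : SRel S A :=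
  ⟨ρ.m, fun s => { b | (fun i => b (i - 1)) ∈ ρ.rel s }⟩

/-- Componentwise transposition of the first two coordinates. -/
def swapRel (ρ : SRel S A) : SRel S A :=
  ⟨ρ.m, fun s => { b | (fun i => b (Equiv.swap 0 1 i)) ∈ ρ.rel s }⟩

/-- Componentwise deletion of the first coordinate (identity on unary relations). -/
def prRel (ρ : SRel S A) : SRel S A :=
  match ρ with
  | ⟨0, r⟩ => ⟨0, r⟩
  | ⟨m + 1, r⟩ => ⟨m, fun s => { b | ∃ a ∈ r s, b = fun j => a j.succ }⟩

/-- Componentwise Cartesian product. -/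
def prodRel (ρ ρ' : SRel S A) : SRel S A :=
  ⟨ρ.m + ρ'.m + 1, fun s =>
    { c | (fun i : Fin (ρ.m + 1) => c ⟨i.val, by have := i.isLt; omega⟩) ∈ ρ.rel s ∧
          (fun i : Fin (ρ'.m + 1) => c ⟨ρ.m + 1 + i.val, by have := i.isLt; omega⟩) ∈ ρ'.rel s }⟩

/-- Componentwise intersection; empty if the arities differ. -/
def interRel (ρ ρ' : SRel S A) : SRel S A :=
  if h : ρ.m = ρ'.m then
    ⟨ρ.m, fun s => { a | a ∈ ρ.rel s ∧
        (fun i : Fin (ρ'.m + 1) => a (Fin.cast (by omega) i)) ∈ ρ'.rel s }⟩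
  else ⟨ρ.m, fun _ => ∅⟩

/-- Index translation `μ_v(ρ) := (ρ_{sv})_{s ∈ S}`. -/
def muRel (v : S) (ρ : SRel S A) : SRel S A := ⟨ρ.m, fun s => ρ.rel (s * v)⟩

/-- `v`-self-intersection `(⊓^v ρ)_s := ⋂ { ρ_{s'} ∣ s'v = s }`
(an empty intersection being the full relation). -/
def selfInterRel (v : S) (ρ : SRel S A) : SRel S A :=
  ⟨ρ.m, fun s => { a | ∀ s' : S, s' * v = s → a ∈ ρ.rel s' }⟩

/-- A set of `S`-relations is an `S`-relational clone if it contains `δ^S` and is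
closed under `ζ`, `τ`, `pr`, `×`, `∧`, `μ_v` and `⊓^v`. -/
def IsSRelClone (Q : Set (SRel S A)) : Prop :=
  deltaS S A ∈ Q ∧
  (∀ ρ ∈ Q, cycRel ρ ∈ Q) ∧
  (∀ ρ ∈ Q, swapRel ρ ∈ Q) ∧
  (∀ ρ ∈ Q, prRel ρ ∈ Q) ∧
  (∀ ρ ∈ Q, ∀ ρ' ∈ Q, prodRel ρ ρ' ∈ Q) ∧
  (∀ ρ ∈ Q, ∀ ρ' ∈ Q, interRel ρ ρ' ∈ Q) ∧
  (∀ (v : S), ∀ ρ ∈ Q, muRel v ρ ∈ Q) ∧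
  (∀ (v : S), ∀ ρ ∈ Q, selfInterRel v ρ ∈ Q)

/-- The `S`-relational clone generated by `Q`. -/
def SRg (Q : Set (SRel S A)) : Set (SRel S A) := ⋂₀ { R | IsSRelClone R ∧ Q ⊆ R }

/-- `Γ_F(ρ)`: the least `S`-relation of the same arity containing `ρ` and invariant
for `F` (defined as the intersection of all such). -/
def Gamma (F : Set (SOp S A)) (ρ : SRel S A) : SRel S A :=
  ⟨ρ.m, fun s => ⋂ g ∈ { g : S → Set (Fin (ρ.m + 1) → A) |
      (⟨ρ.m, g⟩ : SRel S A) ∈ SInv F ∧ ∀ t, ρ.rel t ⊆ g t }, g s⟩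

/-- Trivial `S`-operations (trivial projections): projections whose essential
argument has signum `e`. -/
def SJ (S A : Type*) [Monoid S] : Set (SOp S A) :=
  { f | ∃ i : Fin (f.n + 1), f.sgn i = 1 ∧ ∀ x, f.fn x = x i }

/-- A diagonal relation: empty, or defined by an equivalence relation on the coordinates. -/
def IsDiagonal {A : Type*} {m : ℕ} (σ : Set (Fin m → A)) : Prop :=
  σ = ∅ ∨ ∃ ε : Fin m → Fin m → Prop, Equivalence ε ∧ σ = { a | ∀ i j, ε i j → a i = a j }

/-- `S`-diagonal `S`-relations. -/
def SD (S A : Type*) [Monoid S] : Set (SRel S A) :=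
  { ρ | (∀ s, IsDiagonal (ρ.rel s)) ∧
      ∀ s t : S, ({ x | ∃ u, x = u * s } : Set S) ⊆ { x | ∃ u, x = u * t } →
        ρ.rel s ⊆ ρ.rel t }

/-- Projection of an `S`-relation to the rows `z 0, …, z t` (componentwise). -/
def prMulti {t : ℕ} (ρ : SRel S A) (z : Fin (t + 1) → Fin (ρ.m + 1)) : SRel S A :=
  ⟨t, fun s => { b | ∃ a ∈ ρ.rel s, b = fun j => a (z j) }⟩

/-- One step of the inductive construction of `Γ_F(ρ)`:
`R s ∪ { f(r₁,…,r_n) ∣ f ∈ F, r_j ∈ R (sgn(f)_j * s) }`. -/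
def gammaStep (F : Set (SOp S A)) {m : ℕ}
    (R : S → Set (Fin (m + 1) → A)) : S → Set (Fin (m + 1) → A) :=
  fun s => R s ∪ { b | ∃ f ∈ F, ∃ r : Fin (f.n + 1) → (Fin (m + 1) → A),
    (∀ j, r j ∈ R (f.sgn j * s)) ∧ b = fun z => f.fn fun j => r j z }

/-- `χ` is (a presentation of) the `S`-relation `χ^λ`: its rows are enumerated by
*all* tuples of `A^n` via `e`, and its `s`-component consists exactly of the columns
`κ_i` with `λ i = s`. -/
def IsChi {n : ℕ} (lam : Fin n → S) (χ : SRel S A) : Prop :=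
  ∃ e : Fin (χ.m + 1) ≃ (Fin n → A),
    ∀ s, χ.rel s = { c | ∃ i, lam i = s ∧ c = fun z => e z i }

/-- `γ_Q(ρ)`: the least `S`-relation of the same arity containing `ρ` and belonging
to the `S`-relational clone generated by `Q` (defined as the intersection of all such). -/
def gammaQ (Q : Set (SRel S A)) (ρ : SRel S A) : SRel S A :=
  ⟨ρ.m, fun s => ⋂ g ∈ { g : S → Set (Fin (ρ.m + 1) → A) |
      (⟨ρ.m, g⟩ : SRel S A) ∈ SRg Q ∧ ∀ t, ρ.rel t ⊆ g t }, g s⟩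

/-- `π`-dual of an `S`-operation. -/
def opPi (π : Equiv.Perm A) (f : SOp S A) : SOp S A :=
  ⟨f.n, fun x => π (f.fn fun i => π.symm (x i)), f.sgn⟩

/-- `π`-dual of an `S`-relation. -/
def relPi (π : Equiv.Perm A) (ρ : SRel S A) : SRel S A :=
  ⟨ρ.m, fun s => { b | ∃ a ∈ ρ.rel s, b = fun i => π (a i) }⟩

/-- `h`-dual of an `S`-operation (only the signum changes). -/
def opH (h : S ≃* S) (f : SOp S A) : SOp S A :=
  ⟨f.n, f.fn, fun i => h (f.sgn i)⟩

/-- `h`-dual of an `S`-relation: `ρ^h := (ρ_{h⁻¹(s)})_{s ∈ S}`. -/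
def relH (h : S ≃* S) (ρ : SRel S A) : SRel S A :=
  ⟨ρ.m, fun s => ρ.rel (h.symm s)⟩

end

/-- An ordinary (unsigned) operation on `A`. -/
structure UOp (A : Type*) where
  n : ℕ
  fn : (Fin (n + 1) → A) → A

/-- An ordinary (unsigned) relation on `A`. -/
structure URel (A : Type*) where
  m : ℕ
  rel : Set (Fin (m + 1) → A)

/-- Ordinary preservation of a relation by an operation. -/
def UPreserves {A : Type*} (f : UOp A) (σ : URel A) : Prop :=
  ∀ r : Fin (f.n + 1) → (Fin (σ.m + 1) → A),
    (∀ i, r i ∈ σ.rel) → (fun j => f.fn fun i => r i j) ∈ σ.rel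

/-- Polymorphisms of a set of ordinary relations. -/
def UPol {A : Type*} (R : Set (URel A)) : Set (UOp A) := { f | ∀ σ ∈ R, UPreserves f σ }

/-- A clone: contains all projections and is closed under composition. -/
def IsClone {A : Type*} (C : Set (UOp A)) : Prop :=
  (∀ (n : ℕ) (i : Fin (n + 1)), (⟨n, fun x => x i⟩ : UOp A) ∈ C) ∧
  (∀ f ∈ C, ∀ (m : ℕ) (g : Fin (f.n + 1) → ((Fin (m + 1) → A) → A)),
    (∀ i, (⟨m, g i⟩ : UOp A) ∈ C) → (⟨m, fun x => f.fn fun i => g i x⟩ : UOp A) ∈ C)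

/-- The clone generated by a set of operations. -/
def CloneGen {A : Type*} (G : Set (UOp A)) : Set (UOp A) := ⋂₀ { C | IsClone C ∧ G ⊆ C }

/-!
Every `S`-preclone is closed under minors whose signa are compatible (permutations come from
`ζ` and `τ`, new variables from `∇^s`, identifications from `Δ`), and, by composing at the
first argument repeatedly, under superposition. Hence the functions
`x ↦ H(x_{I 0}, …, x_{I k})` with `H ∈ ⟨F⟩_S` and `λ (I p) = sgn(H)_p · s`, read column-wise
on the rows of `χ^λ`, form an `F`-invariant `S`-relation containing `χ^λ`, and so containing
`Γ_F(χ^λ)`. If `g` preserves `Γ_F(χ^λ)`, then `g` applied to the columns of `χ^λ` lies in its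
`e`-component, so `g` is such a function for `s = e`: a minor of an operation of `⟨F⟩_S`.
Conversely, the operations preserving a fixed `S`-relation form an `S`-preclone, and
`Γ_F(χ^λ)` is invariant under `F`.
-/

section Minors

open Function Equiv

variable {S A : Type*}

def minorOp (H : SOp S A) {m : ℕ} (I : Fin (H.n + 1) → Fin (m + 1)) (sg : Fin (m + 1) → S) :
    SOp S A :=
  ⟨m, fun x => H.fn (x ∘ I), sg⟩

def MinorClosed (G : Set (SOp S A)) : Prop :=
  ∀ H ∈ G, ∀ {m : ℕ} (I : Fin (H.n + 1) → Fin (m + 1)) (sg : Fin (m + 1) → S),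
    (∀ p, sg (I p) = H.sgn p) → minorOp H I sg ∈ G

def MinorStable (G : Set (SOp S A)) {n m : ℕ} (I : Fin (n + 1) → Fin (m + 1)) : Prop :=
  ∀ (fn : (Fin (n + 1) → A) → A) (sg : Fin (m + 1) → S),
    (⟨n, fn, sg ∘ I⟩ : SOp S A) ∈ G → minorOp ⟨n, fn, sg ∘ I⟩ I sg ∈ G

theorem MinorStable.comp {G : Set (SOp S A)} {n k m : ℕ} {I : Fin (n + 1) → Fin (k + 1)}
    {J : Fin (k + 1) → Fin (m + 1)} (hI : MinorStable G I) (hJ : MinorStable G J) :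
    MinorStable G (J ∘ I) :=
  fun fn sg h => hJ _ sg (hI fn (sg ∘ J) h)

-- `0` and `1` both go to `0` (truncated subtraction): the minor along `collapse` is `Δ`.
def collapse (n : ℕ) (j : Fin (n + 2)) : Fin (n + 1) := ⟨j - 1, by omega⟩

@[simp] theorem collapse_zero (n : ℕ) : collapse n 0 = 0 := rfl

@[simp] theorem collapse_one (n : ℕ) : collapse n 1 = 0 := Fin.ext (by simp [collapse])

@[simp] theorem collapse_succ {n : ℕ} (i : Fin (n + 1)) : collapse n i.succ = i :=
  Fin.ext (by simp [collapse])

theorem deltaOp_eq_minorOp {n : ℕ} {fn : (Fin (n + 2) → A) → A} {sg : Fin (n + 2) → S}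
    (h : sg 0 = sg 1) :
    deltaOp ⟨n + 1, fn, sg⟩ = minorOp ⟨n + 1, fn, sg⟩ (collapse n) (sg ∘ Fin.succ) := by
  simp [deltaOp, h, minorOp, collapse, Function.comp_def]

end Minors

section Preclones

open Function Equiv

variable {S A : Type*} [Monoid S] {G : Set (SOp S A)}

theorem IsSPreclone.idOp_mem (hG : IsSPreclone G) : idOp S A ∈ G := hG.1

theorem IsSPreclone.cycOp_mem (hG : IsSPreclone G) {f : SOp S A} (hf : f ∈ G) :
    cycOp f ∈ G := hG.2.1 f hf

theorem IsSPreclone.swapOp_mem (hG : IsSPreclone G) {f : SOp S A} (hf : f ∈ G) :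
    swapOp f ∈ G := hG.2.2.1 f hf

theorem IsSPreclone.nablaOp_mem (hG : IsSPreclone G) (s : S) {f : SOp S A} (hf : f ∈ G) :
    nablaOp s f ∈ G := hG.2.2.2.1 s f hf

theorem IsSPreclone.deltaOp_mem (hG : IsSPreclone G) {f : SOp S A} (hf : f ∈ G) :
    deltaOp f ∈ G := hG.2.2.2.2.1 f hf

theorem IsSPreclone.compOp_mem (hG : IsSPreclone G) {f g : SOp S A} (hf : f ∈ G)
    (hg : g ∈ G) : compOp f g ∈ G := hG.2.2.2.2.2 f hf g hg

theorem subset_SSg (F : Set (SOp S A)) : F ⊆ SSg F := fun _ hf _ hG => hG.2 hf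

theorem SSg_subset {F : Set (SOp S A)} (hG : IsSPreclone G) (hFG : F ⊆ G) : SSg F ⊆ G :=
  fun _ hf => hf G ⟨hG, hFG⟩

theorem isSPreclone_SSg (F : Set (SOp S A)) : IsSPreclone (SSg F) :=
  ⟨fun _ hG => hG.1.idOp_mem,
    fun _ hf _ hG => hG.1.cycOp_mem (hf _ hG),
    fun _ hf _ hG => hG.1.swapOp_mem (hf _ hG),
    fun s _ hf _ hG => hG.1.nablaOp_mem s (hf _ hG),
    fun _ hf _ hG => hG.1.deltaOp_mem (hf _ hG),
    fun _ hf _ hg _ hG => hG.1.compOp_mem (hf _ hG) (hg _ hG)⟩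

theorem isSPreclone_of_minorClosed (hid : idOp S A ∈ G) (hmin : MinorClosed G)
    (hcomp : ∀ f ∈ G, ∀ g ∈ G, compOp f g ∈ G) : IsSPreclone G := by
  refine ⟨hid, fun f hf => hmin f hf (· + 1) (fun i => f.sgn (i - 1)) (by simp),
    fun f hf => hmin f hf (swap 0 1) (f.sgn ∘ swap 0 1) (by simp),
    fun s f hf => hmin f hf Fin.succ (Fin.cons s f.sgn) (by simp), ?_, hcomp⟩
  rintro ⟨_ | n, fn, sg⟩ hf
  · exact hf
  by_cases h : sg 0 = sg 1
  · rw [deltaOp_eq_minorOp h]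
    refine hmin _ hf _ _ fun p => ?_
    cases p using Fin.cases with
    | zero => simpa using h.symm
    | succ i => simp
  · simpa [deltaOp, h] using hf

theorem minorStable_add_one (hG : IsSPreclone G) {n : ℕ} :
    MinorStable G (· + 1 : Fin (n + 1) → Fin (n + 1)) := by
  intro fn sg h
  convert hG.cycOp_mem h using 1
  simp [minorOp, cycOp, Function.comp_def]

theorem minorStable_swap (hG : IsSPreclone G) {n : ℕ} :
    MinorStable G (swap 0 1 : Fin (n + 1) → Fin (n + 1)) := by
  intro fn sg h
  convert hG.swapOp_mem h using 1
  simp [minorOp, swapOp, Function.comp_def]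

theorem minorStable_succ (hG : IsSPreclone G) {n : ℕ} :
    MinorStable G (Fin.succ : Fin (n + 1) → Fin (n + 2)) := by
  intro fn sg h
  convert hG.nablaOp_mem (sg 0) h using 1
  simp only [minorOp, nablaOp, SOp.mk.injEq, heq_eq_eq, true_and]
  exact ⟨rfl, (Fin.cons_self_tail sg).symm⟩

theorem minorStable_collapse (hG : IsSPreclone G) {n : ℕ} : MinorStable G (collapse n) := by
  intro fn sg h
  convert hG.deltaOp_mem h using 1
  rw [deltaOp_eq_minorOp (by simp)]
  rfl

theorem minorStable_perm (hG : IsSPreclone G) {n : ℕ} (π : Perm (Fin (n + 1))) :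
    MinorStable G π := by
  let M : Submonoid (Perm (Fin (n + 1))) :=
    { carrier := {π | MinorStable G π}
      one_mem' := fun fn sg h => h
      mul_mem' := fun hπ hσ => hσ.comp hπ }
  cases n with
  | zero => exact (Equiv.ext fun _ => Fin.ext (by omega) : 1 = π) ▸ M.one_mem
  | succ n =>
    have hgen : Submonoid.closure {finRotate (n + 2), swap 0 1} ≤ M := by
      refine Submonoid.closure_le.mpr (Set.insert_subset_iff.mpr ⟨?_, ?_⟩)
      · show MinorStable G (finRotate (n + 2))
        rw [show ⇑(finRotate (n + 2)) = (· + 1) from funext finRotate_apply]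
        exact minorStable_add_one hG
      · exact Set.singleton_subset_iff.mpr (minorStable_swap hG)
    have htop := Equiv.Perm.closure_cycle_adjacent_swap (isCycle_finRotate (n := n))
      support_finRotate 0
    rw [finRotate_apply, zero_add, ← Subgroup.toSubmonoid_inj,
      Subgroup.closure_toSubmonoid_of_finite] at htop
    exact hgen (htop ▸ Submonoid.mem_top π)

theorem minorStable_of_bijective (hG : IsSPreclone G) {n m : ℕ} {I : Fin (n + 1) → Fin (m + 1)}
    (hI : Bijective I) : MinorStable G I := by
  obtain rfl : n = m := by simpa using Fintype.card_of_bijective hI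
  exact minorStable_perm hG (Equiv.ofBijective I hI)

theorem minorStable_of_injective (hG : IsSPreclone G) {n m : ℕ} {I : Fin (n + 1) → Fin (m + 1)}
    (hI : Injective I) : MinorStable G I := by
  induction m generalizing n with
  | zero => exact minorStable_of_bijective hG ⟨hI, fun y => ⟨0, Fin.ext (by omega)⟩⟩
  | succ m ih =>
    by_cases hsurj : Surjective I
    · exact minorStable_of_bijective hG ⟨hI, hsurj⟩
    obtain ⟨q, hq⟩ := not_forall.mp hsurj
    have hne : ∀ p, swap 0 q (I p) ≠ 0 := fun p h =>
      hq ⟨p, by rw [← swap_apply_self 0 q (I p), h, swap_apply_left]⟩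
    -- `I` avoids `q`, so after moving `q` to `0` it factors through `Fin.succ`
    let I' : Fin (n + 1) → Fin (m + 1) := fun p => (swap 0 q (I p)).pred (hne p)
    have hI' : Injective I' := fun p p' h =>
      hI ((swap 0 q).injective (Fin.pred_inj.mp h))
    have hfac : I = swap 0 q ∘ Fin.succ ∘ I' := funext fun p => by simp [I']
    rw [hfac]
    exact ((ih hI').comp (minorStable_succ hG)).comp (minorStable_perm hG _)

theorem exists_perm_apply_zero_apply_one {n : ℕ} {w w' : Fin (n + 2)} (h : w ≠ w') :
    ∃ π : Perm (Fin (n + 2)), π 0 = w ∧ π 1 = w' := by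
  have hw : swap 0 w w' ≠ 0 := fun h' => h (by simpa using (congrArg (swap 0 w) h').symm)
  refine ⟨swap 0 w * swap 1 (swap 0 w w'), ?_, ?_⟩
  · rw [Perm.mul_apply, swap_apply_of_ne_of_ne (by simp) hw.symm, swap_apply_left]
  · rw [Perm.mul_apply, swap_apply_left, swap_apply_self]

theorem minorStable (hG : IsSPreclone G) {n m : ℕ} (I : Fin (n + 1) → Fin (m + 1)) :
    MinorStable G I := by
  induction n with
  | zero => exact minorStable_of_injective hG fun p p' _ => Fin.ext (by omega)
  | succ n ih =>
    by_cases hI : Injective I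
    · exact minorStable_of_injective hG hI
    obtain ⟨w, w', hIww, hww⟩ : ∃ w w', I w = I w' ∧ w ≠ w' := by
      simpa [Injective] using hI
    obtain ⟨π, hπ0, hπ1⟩ := exists_perm_apply_zero_apply_one hww
    -- `I ∘ π` agrees on `0` and `1`, so it factors through `collapse`
    have hfac : I ∘ π = (I ∘ π ∘ Fin.succ) ∘ collapse n := by
      funext p
      cases p using Fin.cases with
      | zero => simp [hπ0, hπ1, hIww]
      | succ p => simp
    have hIπ : MinorStable G (I ∘ π) := hfac ▸ (minorStable_collapse hG).comp (ih _)
    simpa [Function.comp_assoc] using (minorStable_perm hG π.symm).comp hIπ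

theorem IsSPreclone.minorClosed (hG : IsSPreclone G) : MinorClosed G := by
  rintro ⟨n, fn, sgn⟩ hH m I sg hsg
  exact minorStable hG I fn sg (by rwa [show sg ∘ I = sgn from funext hsg])

theorem compOp_sgn_left (f g : SOp S A) (i : Fin (g.n + 1)) :
    (compOp f g).sgn (⟨i, by omega⟩ : Fin (g.n + f.n + 1)) = g.sgn i * f.sgn 0 :=
  dif_pos i.isLt

theorem compOp_sgn_right (f g : SOp S A) (j : Fin f.n) :
    (compOp f g).sgn (⟨g.n + 1 + j, by omega⟩ : Fin (g.n + f.n + 1)) = f.sgn j.succ := by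
  simp only [compOp, dif_neg (show ¬ g.n + 1 + (j : ℕ) < g.n + 1 by omega)]
  congr 1
  ext
  simp
  omega

theorem minorClosed_setOf_sPreserves (ρ : SRel S A) :
    MinorClosed {f : SOp S A | SPreserves f ρ} :=
  fun _ hH _ I _ hsg s r hr => hH s (r ∘ I) fun p => hsg p ▸ hr (I p)

theorem SPreserves.compOp {f g : SOp S A} {ρ : SRel S A} (hf : SPreserves f ρ)
    (hg : SPreserves g ρ) : SPreserves (compOp f g) ρ := by
  intro s r hr
  have hfirst : (fun z => g.fn fun i => r (⟨i, by omega⟩ : Fin (g.n + f.n + 1)) z) ∈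
      ρ.rel (f.sgn 0 * s) := hg _ _ fun i => by
    simpa [compOp_sgn_left, mul_assoc] using hr (⟨i, by omega⟩ : Fin (g.n + f.n + 1))
  refine hf s (fun k z => Fin.cases (g.fn fun i => r (⟨i, by omega⟩ : Fin (g.n + f.n + 1)) z)
    (fun j => r (⟨g.n + 1 + j, by omega⟩ : Fin (g.n + f.n + 1)) z) k) fun k => ?_
  cases k using Fin.cases with
  | zero => exact hfirst
  | succ j => simpa [compOp_sgn_right] using hr (⟨g.n + 1 + j, by omega⟩ : Fin (g.n + f.n + 1))

theorem isSPreclone_setOf_sPreserves (ρ : SRel S A) :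
    IsSPreclone {f : SOp S A | SPreserves f ρ} :=
  isSPreclone_of_minorClosed (fun s r hr => by
    have h := hr 0
    simp only [idOp, one_mul] at h
    exact h)
    (minorClosed_setOf_sPreserves ρ) fun _ hf _ hg => hf.compOp hg

theorem Gamma_mem_SInv (F : Set (SOp S A)) (ρ : SRel S A) : Gamma F ρ ∈ SInv F :=
  fun f hf s r hr => Set.mem_iInter₂.mpr fun σ hσ =>
    hσ.1 f hf s r fun i => Set.mem_iInter₂.mp (hr i) σ hσ

theorem rel_subset_Gamma (F : Set (SOp S A)) (ρ : SRel S A) (s : S) :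
    ρ.rel s ⊆ (Gamma F ρ).rel s :=
  fun _ ha => Set.mem_iInter₂.mpr fun _ hσ => hσ.2 s ha

theorem Gamma_rel_subset {F : Set (SOp S A)} {ρ : SRel S A} {σ : S → Set (Fin (ρ.m + 1) → A)}
    (hσ : (⟨ρ.m, σ⟩ : SRel S A) ∈ SInv F) (hρσ : ∀ t, ρ.rel t ⊆ σ t) (s : S) :
    (Gamma F ρ).rel s ⊆ σ s :=
  fun _ ha => Set.mem_iInter₂.mp ha σ ⟨hσ, hρσ⟩

theorem fin_add_cases (k n : ℕ) (p : Fin (k + n + 1)) :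
    (∃ i : Fin (k + 1), p = ⟨i, by omega⟩) ∨
      ∃ j : Fin n, p = ⟨k + 1 + j, by omega⟩ := by
  by_cases hp : (p : ℕ) < k + 1
  · exact .inl ⟨⟨p, hp⟩, rfl⟩
  · exact .inr ⟨⟨p - (k + 1), by omega⟩, Fin.ext (by simp; omega)⟩

def rotateBlock (k n : ℕ) (p : Fin (k + n + 1)) : Fin (n + k + 1) :=
  if h : (p : ℕ) < k + 1 then ⟨n + p, by omega⟩ else ⟨p - (k + 1), by omega⟩

theorem rotateBlock_left {k n : ℕ} (i : Fin (k + 1)) :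
    rotateBlock k n ⟨i, by omega⟩ = Fin.natAdd n i := by
  rw [rotateBlock, dif_pos i.isLt]
  rfl

theorem rotateBlock_right {k n : ℕ} (j : Fin n) :
    rotateBlock k n ⟨k + 1 + j, by omega⟩ = Fin.castAdd (k + 1) j := by
  rw [rotateBlock, dif_neg (by simp; omega)]
  ext
  simp

-- `substFirst H K` is `(x₁, …, x_n, y) ↦ H(K(y), x₁, …, x_n)`: the arguments of `K` go last.
def substFirst (H K : SOp S A) : SOp S A :=
  minorOp (compOp H K) (rotateBlock K.n H.n)
    (Fin.append (m := H.n) (fun j => H.sgn j.succ) fun q => K.sgn q * H.sgn 0)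

theorem substFirst_fn (H K : SOp S A) (x : Fin ((substFirst H K).n + 1) → A) :
    (substFirst H K).fn x =
      H.fn (Fin.cons (K.fn fun q => x (Fin.natAdd H.n q))
        fun j => x (Fin.castAdd (K.n + 1) j)) := by
  simp only [substFirst, minorOp, compOp]
  congr 1
  funext k
  cases k using Fin.cases with
  | zero => exact congrArg K.fn (funext fun i => congrArg x (rotateBlock_left i))
  | succ j => exact congrArg x (rotateBlock_right j)

theorem substFirst_sgn_castAdd (H K : SOp S A) (j : Fin H.n) :
    (substFirst H K).sgn (Fin.castAdd (K.n + 1) j) = H.sgn j.succ :=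
  Fin.append_left (fun j => H.sgn j.succ) (fun q => K.sgn q * H.sgn 0) j

theorem substFirst_sgn_natAdd (H K : SOp S A) (q : Fin (K.n + 1)) :
    (substFirst H K).sgn (Fin.natAdd H.n q) = K.sgn q * H.sgn 0 :=
  Fin.append_right (fun j => H.sgn j.succ) (fun q => K.sgn q * H.sgn 0) q

theorem substFirst_mem (hG : IsSPreclone G) {H K : SOp S A} (hH : H ∈ G) (hK : K ∈ G) :
    substFirst H K ∈ G := by
  refine hG.minorClosed _ (hG.compOp_mem hH hK) _ _ fun p => ?_
  rcases fin_add_cases K.n H.n p with ⟨i, rfl⟩ | ⟨j, rfl⟩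
  · rw [rotateBlock_left, Fin.append_right, compOp_sgn_left]
  · rw [rotateBlock_right, Fin.append_left, compOp_sgn_right]

def Represents (G : Set (SOp S A)) {X : Type*} (lam : X → S) (s : S) (φ : (X → A) → A) :
    Prop :=
  ∃ H ∈ G, ∃ I : Fin (H.n + 1) → X,
    (∀ p, lam (I p) = H.sgn p * s) ∧ ∀ x, φ x = H.fn (x ∘ I)

section Represents

variable {X : Type*} {lam : X → S} {s : S}

theorem represents_eval (hid : idOp S A ∈ G) {x₀ : X} (h : lam x₀ = s) :
    Represents G lam s fun x => x x₀ :=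
  ⟨idOp S A, hid, fun _ => x₀, fun _ => by simp [idOp, h], fun _ => rfl⟩

-- Arguments `0, …, t - 1` are substituted one at a time, always at position `0` by
-- `substFirst`, which moves the new variables behind those from position `t` on.
theorem represents_app_of_eval_of_le (hG : IsSPreclone G) (t : ℕ) :
    ∀ H ∈ G, ∀ a : Fin (H.n + 1) → (X → A) → A,
      (∀ p, Represents G lam (H.sgn p * s) (a p)) →
      (∀ p : Fin (H.n + 1), t ≤ p → ∃ x, lam x = H.sgn p * s ∧ a p = fun v => v x) →
      Represents G lam s fun v => H.fn fun p => a p v := by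
  induction t with
  | zero =>
    intro H hH a _ hvar
    choose I hI using fun p => hvar p (Nat.zero_le _)
    exact ⟨H, hH, I, fun p => (hI p).1, fun v => by simp [(hI _).2, Function.comp_def]⟩
  | succ t ih =>
    intro H hH a ha hvar
    obtain ⟨K, hK, J, hJ, ha0⟩ := ha 0
    let a' : Fin (H.n + (K.n + 1)) → (X → A) → A :=
      Fin.append (fun j => a j.succ) fun q v => v (J q)
    have hJ' (q : Fin (K.n + 1)) : lam (J q) = (substFirst H K).sgn (Fin.natAdd H.n q) * s := by
      rw [substFirst_sgn_natAdd, hJ, mul_assoc]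
    have hrep' : ∀ p : Fin (H.n + (K.n + 1)),
        Represents G lam ((substFirst H K).sgn p * s) (a' p) := by
      intro p
      induction p using Fin.addCases with
      | left j => simpa [a', substFirst_sgn_castAdd] using ha j.succ
      | right q => simpa [a'] using represents_eval hG.idOp_mem (hJ' q)
    have hvar' : ∀ p : Fin (H.n + (K.n + 1)), t ≤ p →
        ∃ x, lam x = (substFirst H K).sgn p * s ∧ a' p = fun v => v x := by
      intro p hp
      induction p using Fin.addCases with
      | left j => simpa [a', substFirst_sgn_castAdd] using hvar j.succ (by simp at hp ⊢; omega)
      | right q => exact ⟨J q, hJ' q, by simp [a']⟩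
    convert ih _ (substFirst_mem hG hH hK) a' hrep' hvar' using 2 with v
    rw [substFirst_fn]
    congr 1
    funext p
    cases p using Fin.cases <;> simp [a', ha0, Function.comp_def]

theorem Represents.app (hG : IsSPreclone G) {f : SOp S A} (hf : f ∈ G)
    {φ : Fin (f.n + 1) → (X → A) → A} (hφ : ∀ j, Represents G lam (f.sgn j * s) (φ j)) :
    Represents G lam s fun x => f.fn fun j => φ j x :=
  represents_app_of_eval_of_le hG (f.n + 1) f hf φ hφ fun p hp => absurd p.isLt (by omega)

theorem MinorClosed.mem_of_represents (hG : MinorClosed G) {m : ℕ} {sg : Fin (m + 1) → S}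
    {φ : (Fin (m + 1) → A) → A} (h : Represents G sg 1 φ) :
    (⟨m, φ, sg⟩ : SOp S A) ∈ G := by
  obtain ⟨H, hH, I, hI, hφ⟩ := h
  rw [show φ = fun x => H.fn (x ∘ I) from funext hφ]
  exact hG H hH I sg fun p => by simpa using hI p

end Represents

end Preclones

theorem mem_SSg_iff_preserves_Gamma_chi_general {S A : Type*} [Monoid S]
    (F : Set (SOp S A)) (g : SOp S A) (χ : SRel S A)
    (hχ : IsChi g.sgn χ) :
    g ∈ SSg F ↔ SPreserves g (Gamma F χ) := by
  obtain ⟨e, he⟩ := hχ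
  have hG := isSPreclone_SSg F
  refine ⟨fun hg => SSg_subset (isSPreclone_setOf_sPreserves _) (Gamma_mem_SInv F χ) hg,
    fun hg => ?_⟩
  let σ : S → Set (Fin (χ.m + 1) → A) := fun s =>
    {c | Represents (SSg F) g.sgn s (c ∘ e.symm)}
  have hσ : (⟨χ.m, σ⟩ : SRel S A) ∈ SInv F := fun f hf s r hr =>
    Represents.app hG (subset_SSg F hf) hr
  have hχσ : ∀ t, χ.rel t ⊆ σ t := by
    intro t c hc
    rw [he] at hc
    obtain ⟨i, rfl, rfl⟩ := hc
    simpa [σ, Function.comp_def] using represents_eval hG.idOp_mem (lam := g.sgn) rfl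
  have hcol (i : Fin (g.n + 1)) : (fun z => e z i) ∈ (Gamma F χ).rel (g.sgn i * 1) := by
    rw [mul_one]
    exact rel_subset_Gamma F χ _ (by rw [he]; exact ⟨i, rfl, rfl⟩)
  have hgσ : (fun z => g.fn fun i => e z i) ∈ σ 1 := Gamma_rel_subset hσ hχσ 1 (hg 1 _ hcol)
  have hrep : Represents (SSg F) g.sgn 1 g.fn := by simpa [σ, Function.comp_def] using hgσ
  exact hG.minorClosed.mem_of_represents hrep

/-- Membership in the generated `S`-preclone is characterized by preservation of
`Γ_F(χ^λ)`: for an `S`-operation `g` with signum `λ = sgn g`,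
`g ∈ ⟨F⟩_S ↔ g ⊳_S Γ_F(χ^λ)`. -/
theorem mem_SSg_iff_preserves_Gamma_chi {S A : Type*} [Monoid S] [Fintype S]
    [Fintype A] (F : Set (SOp S A)) (g : SOp S A) (χ : SRel S A)
    (hχ : IsChi g.sgn χ) :
    g ∈ SSg F ↔ SPreserves g (Gamma F χ) :=
  mem_SSg_iff_preserves_Gamma_chi_general F g χ hχ

end SPreclone
end

section
/- Let S be a finite monoid, A a finite set, Q ⊆ SRel(A), and F := SPol Q. For every signum λ = (s_1, …, s_n) ∈ S^n, the e-components agree: Γ_F(χ^λ)_e = γ_Q(χ^λ)_e, where γ_Q(χ^λ) is the least S-relation in [Q]_S of the same arity containing χ^λ. -/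
namespace SPreclone

/-! For `ρ ∈ [Q]_S` every `f ∈ SPol Q` S-preserves `ρ`, since `SInv (SPol Q)` is an S-relational
clone containing `Q`; this gives `Γ_F(χ^λ) ⊆ γ_Q(χ^λ)`.

Conversely, read a tuple `b ∈ γ_Q(χ^λ)_e` as the table of the operation `f_b` with signum `λ`,
through the enumeration of `A^n` by the coordinates of `χ^λ`. Then `f_b(κ_1, …, κ_n) = b` with
`κ_i ∈ χ^λ_{λ_i}`, so `b ∈ Γ_F(χ^λ)_e` as soon as `f_b ∈ SPol Q`. Given `ρ ∈ Q` and
`r_i ∈ ρ_{λ_i s}`, let `y` send a coordinate `j` of `ρ` to the coordinate of `χ^λ` indexed by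
`(r_1 j, …, r_n j)`. The S-relation `μ_s {b' ∣ b' ∘ y ∈ ρ}` contains `χ^λ`, because
`κ_i ∘ y = r_i`, and lies in `[Q]_S`, since relational clones are closed under substitution of
coordinates; hence it contains `b` in its `e`-component, i.e. `f_b(r_1, …, r_n) ∈ ρ_s`. -/

theorem _root_.Equiv.Perm.exists_apply_eq_and_apply_eq {α : Type*} [DecidableEq α]
    {a b p q : α} (hab : a ≠ b) (hpq : p ≠ q) : ∃ π : Equiv.Perm α, π a = p ∧ π b = q := by
  have hb : Equiv.swap a p b ≠ p := fun h =>
    hab ((Equiv.swap a p).injective (h.trans (Equiv.swap_apply_left a p).symm)).symm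
  refine ⟨Equiv.swap (Equiv.swap a p b) q * Equiv.swap a p, ?_, ?_⟩
  · simp only [Equiv.Perm.mul_apply, Equiv.swap_apply_left]
    exact Equiv.swap_apply_of_ne_of_ne hb.symm hpq
  · simp only [Equiv.Perm.mul_apply, Equiv.swap_apply_left]

section RelClone

variable {S A : Type*}

def comapRel {M : ℕ} (ρ : SRel S A) (y : Fin (ρ.m + 1) → Fin (M + 1)) : SRel S A :=
  ⟨M, fun s => { b | b ∘ y ∈ ρ.rel s }⟩

theorem SRel.mk_mem_congr {R : Set (SRel S A)} {N : ℕ} {g g' : S → Set (Fin (N + 1) → A)}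
    (hg : ⟨N, g⟩ ∈ R) (h : ∀ s, g' s = g s) : (⟨N, g'⟩ : SRel S A) ∈ R :=
  funext h ▸ hg

variable [Monoid S]

namespace IsSRelClone

variable {R : Set (SRel S A)}

theorem deltaS_mem (hR : IsSRelClone R) : deltaS S A ∈ R := hR.1

theorem cycRel_mem (hR : IsSRelClone R) {ρ : SRel S A} (hρ : ρ ∈ R) : cycRel ρ ∈ R :=
  hR.2.1 ρ hρ

theorem swapRel_mem (hR : IsSRelClone R) {ρ : SRel S A} (hρ : ρ ∈ R) : swapRel ρ ∈ R :=
  hR.2.2.1 ρ hρ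

theorem prRel_mem (hR : IsSRelClone R) {ρ : SRel S A} (hρ : ρ ∈ R) : prRel ρ ∈ R :=
  hR.2.2.2.1 ρ hρ

theorem prodRel_mem (hR : IsSRelClone R) {ρ ρ' : SRel S A} (hρ : ρ ∈ R) (hρ' : ρ' ∈ R) :
    prodRel ρ ρ' ∈ R :=
  hR.2.2.2.2.1 ρ hρ ρ' hρ'

theorem muRel_mem (hR : IsSRelClone R) (v : S) {ρ : SRel S A} (hρ : ρ ∈ R) : muRel v ρ ∈ R :=
  hR.2.2.2.2.2.2.1 v ρ hρ

theorem univ_mem (hR : IsSRelClone R) : ∀ N : ℕ, (⟨N, fun _ => Set.univ⟩ : SRel S A) ∈ R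
  | 0 => by
    refine SRel.mk_mem_congr (hR.prRel_mem hR.deltaS_mem) fun s => ?_
    ext b
    simp only [Set.mem_univ, true_iff]
    exact ⟨fun _ => b 0, rfl, funext fun j => congrArg b (Fin.fin_one_eq_zero j)⟩
  | N + 1 => by
    refine SRel.mk_mem_congr (hR.prodRel_mem (univ_mem hR N) (univ_mem hR 0)) fun s => ?_
    simp

theorem inter_mem (hR : IsSRelClone R) {N : ℕ} {g g' : S → Set (Fin (N + 1) → A)}
    (hg : ⟨N, g⟩ ∈ R) (hg' : ⟨N, g'⟩ ∈ R) : (⟨N, fun s => g s ∩ g' s⟩ : SRel S A) ∈ R := by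
  have h := hR.2.2.2.2.2.1 _ hg _ hg'
  rwa [interRel, dif_pos rfl] at h

theorem iInter_mem (hR : IsSRelClone R) {ι : Type*} [Fintype ι] {N : ℕ}
    {g : ι → S → Set (Fin (N + 1) → A)} (hg : ∀ i, ⟨N, g i⟩ ∈ R) :
    (⟨N, fun s => ⋂ i, g i s⟩ : SRel S A) ∈ R := by
  classical
  suffices h : ∀ I : Finset ι, (⟨N, fun s => ⋂ i ∈ I, g i s⟩ : SRel S A) ∈ R by
    simpa using h Finset.univ
  intro I
  induction I using Finset.induction_on with
  | empty => simpa using hR.univ_mem N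
  | insert i I _ ih => simpa using hR.inter_mem (hg i) ih

theorem comapRel_perm_mem (hR : IsSRelClone R) {N : ℕ} (π : Equiv.Perm (Fin (N + 1)))
    {g : S → Set (Fin (N + 1) → A)} (hg : ⟨N, g⟩ ∈ R) : comapRel ⟨N, g⟩ π ∈ R := by
  let H : Submonoid (Equiv.Perm (Fin (N + 1))) :=
    { carrier := { π | ∀ g, ⟨N, g⟩ ∈ R → comapRel ⟨N, g⟩ π ∈ R }
      mul_mem' := fun h₁ h₂ g hg => h₁ _ (h₂ g hg)
      one_mem' := fun _ hg => hg }
  -- `ζ` and `τ` are the substitutions along the cycle `(finRotate _)⁻¹` and the swap `(0 1)`,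
  -- which generate the symmetric group.
  suffices hπ : π ∈ Submonoid.closure {(finRotate (N + 1))⁻¹, Equiv.swap 0 1} by
    have hgen : {(finRotate (N + 1))⁻¹, Equiv.swap 0 1} ⊆ (H : Set _) := by
      rintro _ (rfl | rfl) g hg
      · simp only [comapRel, Function.comp_def, Equiv.Perm.inv_def, finRotate_symm_apply]
        exact hR.cycRel_mem hg
      · exact hR.swapRel_mem hg
    exact Submonoid.closure_le.mpr hgen hπ g hg
  rcases N with _ | N
  · rw [show π = 1 from Equiv.ext fun i => Fin.ext (by omega)]
    exact Submonoid.one_mem _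
  · have hcyc : (finRotate (N + 2))⁻¹.IsCycle := isCycle_finRotate.inv
    have hsupp : (finRotate (N + 2))⁻¹.support = Finset.univ := by
      rw [Equiv.Perm.support_inv, support_finRotate]
    have h10 : (finRotate (N + 2))⁻¹ 1 = 0 := by simp [Equiv.Perm.inv_def, finRotate_symm_apply]
    have hgen := Equiv.Perm.closure_cycle_adjacent_swap hcyc hsupp 1
    rw [h10, Equiv.swap_comm] at hgen
    rw [← Subgroup.closure_toSubmonoid_of_finite, hgen]
    exact Subgroup.mem_top π

theorem eq_last_two_mem (hR : IsSRelClone R) : ∀ K : ℕ,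
    (⟨K + 1, fun _ => { c | c ⟨K, by omega⟩ = c ⟨K + 1, by omega⟩ }⟩ : SRel S A) ∈ R
  | 0 => hR.deltaS_mem
  | K + 1 => by
    refine SRel.mk_mem_congr (hR.prodRel_mem (hR.univ_mem K) hR.deltaS_mem) fun s => ?_
    ext c
    exact ⟨fun h => ⟨trivial, h⟩, fun h => h.2⟩

theorem eq_mem (hR : IsSRelClone R) {N : ℕ} {p q : Fin (N + 1)} (hpq : p ≠ q) :
    (⟨N, fun _ => { c | c p = c q }⟩ : SRel S A) ∈ R := by
  rcases N with _ | K
  · exact absurd (Fin.ext (by omega)) hpq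
  obtain ⟨π, hp, hq⟩ := Equiv.Perm.exists_apply_eq_and_apply_eq
    (a := ⟨K, by omega⟩) (b := ⟨K + 1, by omega⟩) (by simp) hpq
  have h := hR.comapRel_perm_mem π (hR.eq_last_two_mem K)
  simpa only [comapRel, Set.mem_ofPred_eq, Function.comp_apply, hp, hq] using h

theorem drop_mem (hR : IsSRelClone R) : ∀ (k : ℕ) {N M : ℕ} (h : N = k + M)
    {g : S → Set (Fin (N + 1) → A)}, (⟨N, g⟩ : SRel S A) ∈ R →
    (⟨M, fun s => { b | ∃ c ∈ g s, b = fun i : Fin (M + 1) => c ⟨k + i, by omega⟩ }⟩ :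
      SRel S A) ∈ R
  | 0, N, M, h, g, hg => by
    obtain rfl : N = M := by omega
    refine SRel.mk_mem_congr hg fun s => ?_
    ext b
    simp
  | k + 1, N, M, h, g, hg => by
    rcases N with _ | N
    · omega
    have hpr : (⟨N, fun s => { b | ∃ a ∈ g s, b = fun j => a j.succ }⟩ : SRel S A) ∈ R :=
      hR.prRel_mem hg
    refine SRel.mk_mem_congr (drop_mem hR k (M := M) (by omega) hpr) fun s => ?_
    ext b
    constructor
    · rintro ⟨c, hc, rfl⟩
      exact ⟨_, ⟨c, hc, rfl⟩, funext fun i => congrArg c (Fin.ext (by simp; omega))⟩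
    · rintro ⟨_, ⟨c, hc, rfl⟩, rfl⟩
      exact ⟨c, hc, funext fun i => congrArg c (Fin.ext (by simp; omega))⟩

theorem comapRel_mem (hR : IsSRelClone R) {ρ : SRel S A} (hρ : ρ ∈ R) {M : ℕ}
    (y : Fin (ρ.m + 1) → Fin (M + 1)) : comapRel ρ y ∈ R := by
  obtain ⟨m, g⟩ := ρ
  -- `{b ∣ b ∘ y ∈ ρ}` is the projection to the last `M + 1` coordinates of
  -- `(ρ × A^(M+1)) ∩ ⋂ z, {c ∣ c (left z) = c (right (y z))}`.
  let left (z : Fin (m + 1)) : Fin (m + M + 2) := ⟨z, by omega⟩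
  let right (i : Fin (M + 1)) : Fin (m + M + 2) := ⟨m + 1 + i, by omega⟩
  have hprod : (⟨m + M + 1, fun s => { c | c ∘ left ∈ g s ∧ c ∘ right ∈ Set.univ }⟩ :
      SRel S A) ∈ R :=
    hR.prodRel_mem hρ (hR.univ_mem M)
  have hdiag : (⟨m + M + 1, fun _ => ⋂ z, { c | c (left z) = c (right (y z)) }⟩ :
      SRel S A) ∈ R :=
    hR.iInter_mem fun z => hR.eq_mem (Fin.ne_of_val_ne (by simp [left, right]; omega))
  refine SRel.mk_mem_congr (hR.drop_mem (m + 1) (M := M) (by omega) (hR.inter_mem hprod hdiag))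
    fun s => ?_
  ext b
  simp only [Set.mem_ofPred_eq, Set.mem_inter_iff, Set.mem_iInter, Set.mem_univ, and_true]
  constructor
  · intro hb
    refine ⟨fun i => if h : i.val < m + 1 then b (y ⟨i, h⟩) else b ⟨i - (m + 1), by omega⟩,
      ⟨?_, fun z => ?_⟩, funext fun i => ?_⟩
    · convert hb using 1
      funext z
      exact dif_pos z.isLt
    · change dite _ _ _ = dite _ _ _
      rw [dif_pos z.isLt, dif_neg (by simp only [right]; omega)]
      exact congrArg b (Fin.ext (by simp [left, right]))
    · change _ = dite _ _ _
      rw [dif_neg (by simp only; omega)]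
      exact congrArg b (Fin.ext (by simp))
  · rintro ⟨c, ⟨hc, hcy⟩, rfl⟩
    convert hc using 1
    funext z
    exact (hcy z).symm

end IsSRelClone

theorem isSRelClone_SRg (Q : Set (SRel S A)) : IsSRelClone (SRg Q) :=
  ⟨fun _ hR => hR.1.1,
   fun ρ hρ R hR => hR.1.2.1 ρ (hρ R hR),
   fun ρ hρ R hR => hR.1.2.2.1 ρ (hρ R hR),
   fun ρ hρ R hR => hR.1.2.2.2.1 ρ (hρ R hR),
   fun ρ hρ ρ' hρ' R hR => hR.1.2.2.2.2.1 ρ (hρ R hR) ρ' (hρ' R hR),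
   fun ρ hρ ρ' hρ' R hR => hR.1.2.2.2.2.2.1 ρ (hρ R hR) ρ' (hρ' R hR),
   fun v ρ hρ R hR => hR.1.2.2.2.2.2.2.1 v ρ (hρ R hR),
   fun v ρ hρ R hR => hR.1.2.2.2.2.2.2.2 v ρ (hρ R hR)⟩

theorem subset_SRg (Q : Set (SRel S A)) : Q ⊆ SRg Q := fun _ hρ _ hR => hR.2 hρ

end RelClone

section Preserves

variable {S A : Type*} [Monoid S] {f : SOp S A}

theorem SPreserves.deltaS (f : SOp S A) : SPreserves f (deltaS S A) :=
  fun _ _ hr => congrArg f.fn (funext hr)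

theorem SPreserves.cycRel {ρ : SRel S A} (h : SPreserves f ρ) : SPreserves f (cycRel ρ) :=
  fun s r hr => h s (fun i (j : Fin (ρ.m + 1)) => r i (j - 1 : Fin (ρ.m + 1))) hr

theorem SPreserves.swapRel {ρ : SRel S A} (h : SPreserves f ρ) : SPreserves f (swapRel ρ) :=
  fun s r hr => h s (fun i (j : Fin (ρ.m + 1)) => r i (Equiv.swap 0 1 j)) hr

theorem SPreserves.prRel {ρ : SRel S A} (h : SPreserves f ρ) : SPreserves f (prRel ρ) := by
  obtain ⟨_ | m, g⟩ := ρ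
  · exact h
  · intro s r hr
    choose a ha hra using hr
    exact ⟨fun j => f.fn fun i => a i j, h s a ha, funext fun j => by simp [hra]⟩

theorem SPreserves.prodRel {ρ ρ' : SRel S A} (h : SPreserves f ρ) (h' : SPreserves f ρ') :
    SPreserves f (prodRel ρ ρ') :=
  fun s _ hr => ⟨h s _ fun i => (hr i).1, h' s _ fun i => (hr i).2⟩

theorem SPreserves.interRel {ρ ρ' : SRel S A} (h : SPreserves f ρ) (h' : SPreserves f ρ') :
    SPreserves f (interRel ρ ρ') := by
  obtain ⟨m, g⟩ := ρ
  obtain ⟨m', g'⟩ := ρ'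
  rcases eq_or_ne m m' with rfl | hne
  · rw [SPreclone.interRel, dif_pos rfl]
    exact fun s r hr => ⟨h s r fun i => (hr i).1, h' s r fun i => (hr i).2⟩
  · rw [SPreclone.interRel, dif_neg hne]
    exact fun s r hr => absurd (hr 0) (Set.notMem_empty _)

theorem SPreserves.muRel {ρ : SRel S A} (v : S) (h : SPreserves f ρ) :
    SPreserves f (muRel v ρ) :=
  fun s r hr => h (s * v) r fun i => mul_assoc (f.sgn i) s v ▸ hr i

theorem SPreserves.selfInterRel {ρ : SRel S A} (v : S) (h : SPreserves f ρ) :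
    SPreserves f (selfInterRel v ρ) :=
  fun s r hr s' hs' => h s' r fun i => hr i (f.sgn i * s') (by rw [mul_assoc, hs'])

theorem isSRelClone_SInv (F : Set (SOp S A)) : IsSRelClone (SInv F) :=
  ⟨fun f _ => SPreserves.deltaS f,
   fun _ hρ f hf => (hρ f hf).cycRel,
   fun _ hρ f hf => (hρ f hf).swapRel,
   fun _ hρ f hf => (hρ f hf).prRel,
   fun _ hρ _ hρ' f hf => (hρ f hf).prodRel (hρ' f hf),
   fun _ hρ _ hρ' f hf => (hρ f hf).interRel (hρ' f hf),
   fun v _ hρ f hf => (hρ f hf).muRel v,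
   fun v _ hρ f hf => (hρ f hf).selfInterRel v⟩

theorem SRg_subset_SInv_SPol (Q : Set (SRel S A)) : SRg Q ⊆ SInv (SPol Q) :=
  fun _ hρ => hρ _ ⟨isSRelClone_SInv _, fun _ hρ' _ hf => hf _ hρ'⟩

end Preserves

section Closures

variable {S A : Type*} [Monoid S]

theorem Gamma_SPol_rel_subset_gammaQ_rel (Q : Set (SRel S A)) (ρ : SRel S A) (s : S) :
    (Gamma (SPol Q) ρ).rel s ⊆ (gammaQ Q ρ).rel s :=
  Set.biInter_mono (fun _ hg => ⟨SRg_subset_SInv_SPol Q hg.1, hg.2⟩) fun _ _ => subset_rfl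

theorem apply_mem_Gamma_rel {F : Set (SOp S A)} {ρ : SRel S A} {f : SOp S A} (hf : f ∈ F)
    {s : S} {r : Fin (f.n + 1) → Fin (ρ.m + 1) → A} (hr : ∀ i, r i ∈ ρ.rel (f.sgn i * s)) :
    (fun j => f.fn fun i => r i j) ∈ (Gamma F ρ).rel s :=
  Set.mem_iInter₂.mpr fun _ hg => hg.1 f hf s r fun i => hg.2 _ (hr i)

theorem gammaQ_rel_subset {Q : Set (SRel S A)} {ρ : SRel S A}
    {g : S → Set (Fin (ρ.m + 1) → A)} (hg : ⟨ρ.m, g⟩ ∈ SRg Q) (hρ : ∀ t, ρ.rel t ⊆ g t)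
    (s : S) : (gammaQ Q ρ).rel s ⊆ g s :=
  fun _ hb => Set.mem_iInter₂.mp hb g ⟨hg, hρ⟩

theorem mk_mem_SPol_of_mem_gammaQ_rel {Q : Set (SRel S A)} {n : ℕ} {lam : Fin (n + 1) → S}
    {χ : SRel S A} {e : Fin (χ.m + 1) ≃ (Fin (n + 1) → A)}
    (hχ : ∀ s, χ.rel s ⊆ { c | ∃ i, lam i = s ∧ c = fun z => e z i })
    {b : Fin (χ.m + 1) → A} (hb : b ∈ (gammaQ Q χ).rel 1) :
    (⟨n, b ∘ e.symm, lam⟩ : SOp S A) ∈ SPol Q := by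
  intro ρ hρ u r hr
  let y (j : Fin (ρ.m + 1)) : Fin (χ.m + 1) := e.symm fun i => r i j
  have hσ : muRel u (comapRel ρ y) ∈ SRg Q :=
    (isSRelClone_SRg Q).muRel_mem u ((isSRelClone_SRg Q).comapRel_mem (subset_SRg Q hρ) y)
  have hχσ : ∀ t, χ.rel t ⊆ (muRel u (comapRel ρ y)).rel t := by
    intro t c hc
    obtain ⟨i, rfl, rfl⟩ := hχ t hc
    simpa [muRel, comapRel, y, Function.comp_def] using hr i
  have hbσ := gammaQ_rel_subset (ρ := χ) hσ hχσ 1 hb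
  change b ∈ (comapRel ρ y).rel (1 * u) at hbσ
  rwa [one_mul] at hbσ

end Closures

theorem Gamma_e_eq_gammaQ_e_general {S A : Type*} [Monoid S]
    (Q : Set (SRel S A)) (n : ℕ) (lam : Fin (n + 1) → S) (χ : SRel S A)
    (hχ : IsChi lam χ) :
    (Gamma (SPol Q) χ).rel 1 = (gammaQ Q χ).rel 1 := by
  obtain ⟨e, hχ⟩ := hχ
  refine (Gamma_SPol_rel_subset_gammaQ_rel Q χ 1).antisymm fun b hb => ?_
  have hcol : ∀ i, (fun z => e z i) ∈ χ.rel (lam i * 1) := fun i => by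
    rw [hχ]
    exact ⟨i, (mul_one _).symm, rfl⟩
  have hb_eval : b = fun j => b (e.symm fun i => e j i) :=
    funext fun j => congrArg b (e.symm_apply_apply j).symm
  rw [hb_eval]
  exact apply_mem_Gamma_rel (mk_mem_SPol_of_mem_gammaQ_rel (fun s => (hχ s).le) hb) hcol

/-- For `F := SPol Q` and any signum `λ`, the `e`-components of the two closures of
`χ^λ` agree: `Γ_F(χ^λ)_e = γ_Q(χ^λ)_e`. -/
theorem Gamma_e_eq_gammaQ_e {S A : Type*} [Monoid S] [Fintype S] [Fintype A]
    (Q : Set (SRel S A)) (n : ℕ) (lam : Fin (n + 1) → S) (χ : SRel S A)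
    (hχ : IsChi lam χ) :
    (Gamma (SPol Q) χ).rel 1 = (gammaQ Q χ).rel 1 :=
  Gamma_e_eq_gammaQ_e_general Q n lam χ hχ

end SPreclone
end
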